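/- For A ∈ {0,1,2}^n and g ∈ {1,2}, the normalized volume in ℤ^{2n} of C_{2,n} ∩ {x : S_{A,g}(x) ≤ 2 − ∑a_i} equals 2^n − n/2^{n−1}. -/

import Mathlib

/-!
In every block a unimodular affine map sends the triangle `Δ₂` onto `{0 ≤ z₁ ≤ z₀ ≤ 1}` and
turns the constraint `S_{A,g}(x) ≤ 2 - ∑ aᵢ` into `∑ z ≤ 2`. So the region is congruent to the
part of `Q = [0,1]^{2n} ∩ {∑ z ≤ 2}` where `z_{j,1} ≤ z_{j,0}` in every block, which by the
coordinate symmetry of `Q` carries `1/2^n` of its volume. Finally `Q` is the simplex of size `2`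
minus `2n` translated unit simplices, so `vol Q = (2^{2n} - 2n)/(2n)!`.
-/

open MeasureTheory Finset

/-- `u_0=(1,2), u_1=(1,−1), u_2=(−2,−1)`. -/
noncomputable def uVec : Fin 3 → Fin 2 → ℝ := ![![1, 2], ![1, -1], ![-2, -1]]

/-- `w_0=(2,1), w_1=(−1,1), w_2=(−1,−2)`. -/
noncomputable def wVec : Fin 3 → Fin 2 → ℝ := ![![2, 1], ![-1, 1], ![-1, -2]]

lemma volume_setOf_coord_eq_const {ι : Type*} [Fintype ι] (i : ι) (a : ℝ) :
    volume {x : ι → ℝ | x i = a} = 0 := by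
  rw [volume_pi]
  exact Measure.pi_hyperplane (fun _ : ι => (volume : Measure ℝ)) i a

lemma volume_setOf_coord_eq_coord {ι : Type*} [Fintype ι] {a b : ι} (hab : a ≠ b) :
    volume {x : ι → ℝ | x a = x b} = 0 := by
  classical
  set L : (ι → ℝ) →ₗ[ℝ] ℝ := LinearMap.proj (R := ℝ) (φ := fun _ : ι => ℝ) a - LinearMap.proj b
  have hL : LinearMap.ker L ≠ ⊤ := by
    intro h
    have : Pi.single a 1 ∈ LinearMap.ker L := h ▸ Submodule.mem_top
    simp [L, hab.symm] at this
  convert Measure.addHaar_submodule volume _ hL using 2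
  ext x
  simp [L, sub_eq_zero]

lemma measurePreserving_comp_equiv {ι κ : Type*} [Fintype ι] [Fintype κ] (e : ι ≃ κ) :
    MeasurePreserving (fun x : κ → ℝ => x ∘ e) volume volume := by
  convert volume_measurePreserving_piCongrLeft (fun _ : ι => ℝ) e.symm
  ext x
  simp [MeasurableEquiv.piCongrLeft, Equiv.piCongrLeft, Equiv.piCongrLeft']

lemma preimage_comp_equiv_Icc {ι κ : Type*} (e : ι ≃ κ) :
    (fun x : κ → ℝ => x ∘ e) ⁻¹' Set.Icc 0 1 = Set.Icc 0 1 := by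
  ext x
  simp [Pi.le_def, e.forall_congr_left]

section Simplex

variable {ι κ : Type*} [Fintype ι] [Fintype κ]

def cornerSimplex (ι : Type*) [Fintype ι] (c : ℝ) : Set (ι → ℝ) := {x | 0 ≤ x ∧ ∑ i, x i ≤ c}

lemma measurableSet_cornerSimplex (c : ℝ) : MeasurableSet (cornerSimplex ι c) :=
  (measurableSet_Ici (a := 0)).inter (measurableSet_le
    (by fun_prop : Measurable fun x : ι → ℝ => ∑ i, x i) measurable_const)

lemma preimage_comp_equiv_cornerSimplex (e : ι ≃ κ) (c : ℝ) :
    (fun x : κ → ℝ => x ∘ e) ⁻¹' cornerSimplex ι c = cornerSimplex κ c := by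
  ext x
  simp [cornerSimplex, Pi.le_def, e.forall_congr_left, Equiv.sum_comp e x]

lemma lintegral_Icc_sub_pow_div_factorial (m : ℕ) {c : ℝ} (hc : 0 ≤ c) :
    ∫⁻ t in Set.Icc 0 c, ENNReal.ofReal ((c - t) ^ m / m.factorial)
      = ENNReal.ofReal (c ^ (m + 1) / (m + 1).factorial) := by
  rw [← ofReal_integral_eq_lintegral_ofReal]
  · rw [integral_Icc_eq_integral_Ioc, ← intervalIntegral.integral_of_le hc,
      intervalIntegral.integral_div, intervalIntegral.integral_comp_sub_left (fun t => t ^ m),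
      sub_self, sub_zero, integral_pow, Nat.factorial_succ]
    push_cast
    field_simp
    simp
  · exact (by fun_prop : Continuous fun t : ℝ => (c - t) ^ m / m.factorial).integrableOn_Icc
  · filter_upwards [ae_restrict_mem measurableSet_Icc] with t ht
    have : 0 ≤ c - t := sub_nonneg.2 ht.2
    positivity

theorem volume_cornerSimplex_fin (m : ℕ) {c : ℝ} (hc : 0 ≤ c) :
    volume (cornerSimplex (Fin m) c) = ENNReal.ofReal (c ^ m / m.factorial) := by
  induction m generalizing c with
  | zero =>
    have : cornerSimplex (Fin 0) c = Set.univ := by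
      ext x
      simp [cornerSimplex, hc, Subsingleton.elim x 0]
    simp [this, volume_pi]
  | succ m ih =>
    -- Fubini along the first coordinate: the slice at height `t` is the simplex of size `c - t`.
    set S : Set (ℝ × (Fin m → ℝ)) := {p | 0 ≤ p.1 ∧ p.2 ∈ cornerSimplex (Fin m) (c - p.1)}
    have hS : MeasurableSet S :=
      (measurableSet_le measurable_const measurable_fst).inter
        ((measurableSet_le measurable_const measurable_snd).inter
          (measurableSet_le (by fun_prop : Measurable fun p : ℝ × (Fin m → ℝ) => ∑ i, p.2 i)
            (by fun_prop : Measurable fun p : ℝ × (Fin m → ℝ) => c - p.1)))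
    have hpre : cornerSimplex (Fin (m + 1)) c
        = MeasurableEquiv.piFinSuccAbove (fun _ => ℝ) 0 ⁻¹' S := by
      ext x
      simp [S, cornerSimplex, Pi.le_def, Fin.forall_fin_succ, Fin.sum_univ_succ,
        MeasurableEquiv.piFinSuccAbove, Fin.tail, le_sub_iff_add_le', and_assoc]
    have hslice (t : ℝ) : volume (Prod.mk t ⁻¹' S)
        = (Set.Icc 0 c).indicator (fun t => ENNReal.ofReal ((c - t) ^ m / m.factorial)) t := by
      by_cases ht : t ∈ Set.Icc 0 c
      · have : Prod.mk t ⁻¹' S = cornerSimplex (Fin m) (c - t) := by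
          ext y
          simp [S, ht.1]
        rw [this, ih (sub_nonneg.2 ht.2), Set.indicator_of_mem ht]
      · have : Prod.mk t ⁻¹' S = ∅ := by
          refine Set.eq_empty_of_forall_notMem fun y ⟨h0, hy, hsum⟩ => ht ⟨h0, ?_⟩
          linarith [Finset.sum_nonneg fun i (_ : i ∈ univ) => hy i]
        rw [this, Set.indicator_of_notMem ht, measure_empty]
    rw [hpre, (volume_preserving_piFinSuccAbove (fun _ => ℝ) 0).measure_preimage
      hS.nullMeasurableSet, Measure.volume_eq_prod, Measure.prod_apply hS]
    simp_rw [hslice]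
    rw [lintegral_indicator measurableSet_Icc, lintegral_Icc_sub_pow_div_factorial m hc]

theorem volume_cornerSimplex {c : ℝ} (hc : 0 ≤ c) :
    volume (cornerSimplex ι c)
      = ENNReal.ofReal (c ^ Fintype.card ι / (Fintype.card ι).factorial) := by
  rw [← preimage_comp_equiv_cornerSimplex (Fintype.equivFin ι).symm,
    (measurePreserving_comp_equiv _).measure_preimage
      (measurableSet_cornerSimplex c).nullMeasurableSet,
    volume_cornerSimplex_fin _ hc]

lemma preimage_add_neg_single_cornerSimplex [DecidableEq ι] (i : ι) (c : ℝ) :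
    (· + -Pi.single i 1) ⁻¹' cornerSimplex ι c = cornerSimplex ι (c + 1) ∩ {x | 1 ≤ x i} := by
  ext x
  simp only [cornerSimplex, Set.mem_inter_iff, Set.mem_preimage, Set.mem_ofPred_eq,
    Pi.le_def, Pi.add_apply, Pi.neg_apply, Pi.zero_apply, sum_add_distrib, sum_neg_distrib,
    Finset.sum_pi_single', mem_univ, if_true]
  constructor
  · rintro ⟨h, hsum⟩
    have hi : 1 ≤ x i := by simpa using h i
    refine ⟨⟨fun j => ?_, by linarith⟩, hi⟩
    rcases eq_or_ne j i with rfl | hj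
    · linarith
    · simpa [hj] using h j
  · rintro ⟨⟨h, hsum⟩, hi⟩
    refine ⟨fun j => ?_, by linarith⟩
    rcases eq_or_ne j i with rfl | hj
    · simpa using hi
    · simpa [hj] using h j

lemma cornerSimplex_eq_union (c : ℝ) :
    cornerSimplex ι c
      = (Set.Icc 0 1 ∩ cornerSimplex ι c) ∪ ⋃ i, cornerSimplex ι c ∩ {x | 1 ≤ x i} := by
  ext x
  simp only [cornerSimplex, Set.mem_union, Set.mem_inter_iff, Set.mem_iUnion,
    Set.mem_Icc, Set.mem_ofPred_eq, Pi.le_def, Pi.zero_apply, Pi.one_apply]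
  constructor
  · rintro ⟨h0, hsum⟩
    by_cases hx : ∀ i, x i ≤ 1
    · exact Or.inl ⟨⟨h0, hx⟩, h0, hsum⟩
    · obtain ⟨i, hi⟩ := not_forall.1 hx
      exact Or.inr ⟨i, ⟨h0, hsum⟩, (not_le.1 hi).le⟩
  · rintro (⟨-, h⟩ | ⟨i, h, -⟩) <;> exact h

/-- The simplex of size `2` is the cube part plus `card ι` unit simplices translated by the basis
vectors, all overlapping only on hyperplanes `x i = 1`. -/
theorem volume_Icc_inter_cornerSimplex_two :
    volume (Set.Icc 0 1 ∩ cornerSimplex ι 2)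
      = ENNReal.ofReal ((2 ^ Fintype.card ι - Fintype.card ι) / (Fintype.card ι).factorial) := by
  classical
  set m := Fintype.card ι
  set K : Set (ι → ℝ) := Set.Icc 0 1 ∩ cornerSimplex ι 2
  set B : ι → Set (ι → ℝ) := fun i => cornerSimplex ι 2 ∩ {x | 1 ≤ x i}
  have hBm (i : ι) : MeasurableSet (B i) :=
    (measurableSet_cornerSimplex 2).inter
      (measurableSet_le measurable_const (measurable_pi_apply i))
  have hB (i : ι) : volume (B i) = ENNReal.ofReal (1 / m.factorial) := by
    have : B i = (· + -Pi.single i 1) ⁻¹' cornerSimplex ι 1 := by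
      rw [preimage_add_neg_single_cornerSimplex, one_add_one_eq_two]
    rw [this, (measurePreserving_add_right volume _).measure_preimage
        (measurableSet_cornerSimplex 1).nullMeasurableSet, volume_cornerSimplex zero_le_one,
      one_pow]
  have hKB : AEDisjoint volume K (⋃ i, B i) := by
    rw [AEDisjoint, Set.inter_iUnion]
    exact measure_iUnion_null fun i => measure_mono_null
      (fun x hx => le_antisymm (hx.1.1.2 i) hx.2.2) (volume_setOf_coord_eq_const i 1)
  have hBB : Pairwise (Function.onFun (AEDisjoint volume) B) := by
    intro i j hij
    refine measure_mono_null ?_ (volume_setOf_coord_eq_const i 1)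
    rintro x ⟨⟨⟨h0, hsum⟩, hi : 1 ≤ x i⟩, -, hj : 1 ≤ x j⟩
    have := add_le_sum (fun k _ => h0 k) (mem_univ i) (mem_univ j) hij
    exact le_antisymm (by linarith) hi
  have hsum : volume (cornerSimplex ι 2) = volume K + ENNReal.ofReal (m / m.factorial) := by
    rw [cornerSimplex_eq_union, measure_union₀ (MeasurableSet.iUnion hBm).nullMeasurableSet hKB,
      measure_iUnion₀ hBB fun i => (hBm i).nullMeasurableSet, tsum_fintype]
    simp only [hB, sum_const, card_univ, nsmul_eq_mul]
    rw [← ENNReal.ofReal_natCast, ← ENNReal.ofReal_mul (by positivity), mul_one_div]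
  rw [volume_cornerSimplex zero_le_two] at hsum
  rw [sub_div, ENNReal.ofReal_sub _ (by positivity)]
  exact ENNReal.eq_sub_of_add_eq ENNReal.ofReal_ne_top hsum.symm

end Simplex

section BlockOrder

variable {ι : Type*}

def blockOrdered (ι : Type*) : Set (ι × Fin 2 → ℝ) := {x | ∀ j, x (j, 1) ≤ x (j, 0)}

lemma measurableSet_blockOrdered [Finite ι] : MeasurableSet (blockOrdered ι) := by
  simp only [blockOrdered, Set.ofPred_forall]
  exact MeasurableSet.iInter fun j =>
    measurableSet_le (measurable_pi_apply _) (measurable_pi_apply _)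

def blockSwap (s : ι → Bool) : Equiv.Perm (ι × Fin 2) :=
  Equiv.prodShear (Equiv.refl ι) fun j => bif s j then Equiv.swap 0 1 else 1

lemma preimage_comp_blockSwap_blockOrdered (s : ι → Bool) :
    (fun x => x ∘ blockSwap s) ⁻¹' blockOrdered ι
      = {x | ∀ j, bif s j then x (j, 0) ≤ x (j, 1) else x (j, 1) ≤ x (j, 0)} := by
  ext x
  refine forall_congr' fun j => ?_
  simp only [Function.comp_apply, blockSwap, Equiv.prodShear_apply, Equiv.refl_apply]
  cases s j <;> simp

lemma exists_comp_blockSwap_mem_blockOrdered (x : ι × Fin 2 → ℝ) :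
    ∃ s, x ∘ blockSwap s ∈ blockOrdered ι := by
  refine ⟨fun j => decide (x (j, 0) < x (j, 1)), ?_⟩
  show x ∈ (fun x => x ∘ blockSwap _) ⁻¹' blockOrdered ι
  rw [preimage_comp_blockSwap_blockOrdered]
  intro j
  by_cases h : x (j, 0) < x (j, 1)
  · simp [h, h.le]
  · simpa [h] using not_lt.1 h

lemma preimage_blockSwap_inter_subset {s t : ι → Bool} {j : ι} (hj : s j ≠ t j) :
    (fun x => x ∘ blockSwap s) ⁻¹' blockOrdered ι ∩ (fun x => x ∘ blockSwap t) ⁻¹' blockOrdered ι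
      ⊆ {x | x (j, 0) = x (j, 1)} := by
  rw [preimage_comp_blockSwap_blockOrdered, preimage_comp_blockSwap_blockOrdered]
  rintro x ⟨hs, ht⟩
  have hs := hs j
  have ht := ht j
  revert hs ht hj
  cases s j <;> cases t j <;> simp only [cond_true, cond_false, ne_eq, not_true_eq_false,
    reduceCtorEq, not_false_eq_true, IsEmpty.forall_iff, forall_const]
  · exact fun h₁ h₀ => le_antisymm h₀ h₁
  · exact fun h₀ h₁ => le_antisymm h₀ h₁

/-- The pieces `x ∘ blockSwap s ∈ K ∩ blockOrdered ι` cover `K`, are congruent, and overlap only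
on the null sets `x (j, 0) = x (j, 1)`. -/
theorem two_pow_mul_volume_inter_blockOrdered [Fintype ι] {K : Set (ι × Fin 2 → ℝ)}
    (hK : MeasurableSet K) (hperm : ∀ σ : Equiv.Perm (ι × Fin 2), (fun x => x ∘ σ) ⁻¹' K = K) :
    2 ^ Fintype.card ι * volume (K ∩ blockOrdered ι) = volume K := by
  classical
  have hKO : MeasurableSet (K ∩ blockOrdered ι) := hK.inter measurableSet_blockOrdered
  set E : (ι → Bool) → Set (ι × Fin 2 → ℝ) :=
    fun s => (fun x => x ∘ blockSwap s) ⁻¹' (K ∩ blockOrdered ι)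
  have hE (s : ι → Bool) : volume (E s) = volume (K ∩ blockOrdered ι) :=
    (measurePreserving_comp_equiv _).measure_preimage hKO.nullMeasurableSet
  have hE_eq (s : ι → Bool) : E s = K ∩ (fun x => x ∘ blockSwap s) ⁻¹' blockOrdered ι := by
    simp only [E]
    rw [Set.preimage_inter, hperm]
  have hcover : K = ⋃ s, E s := by
    refine subset_antisymm (fun x hx => Set.mem_iUnion.2 ?_)
      (Set.iUnion_subset fun s => hE_eq s ▸ Set.inter_subset_left)
    obtain ⟨s, hs⟩ := exists_comp_blockSwap_mem_blockOrdered x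
    exact ⟨s, hE_eq s ▸ ⟨hx, hs⟩⟩
  have hdisj : Pairwise (Function.onFun (AEDisjoint volume) E) := by
    intro s t hst
    obtain ⟨j, hj⟩ := Function.ne_iff.1 hst
    refine measure_mono_null ?_ (volume_setOf_coord_eq_coord (a := (j, 0)) (b := (j, 1)) (by simp))
    rw [hE_eq, hE_eq]
    exact fun x ⟨hs, ht⟩ => preimage_blockSwap_inter_subset hj ⟨hs.2, ht.2⟩
  symm
  calc volume K = ∑ s, volume (E s) := by
        rw [congrArg volume hcover, measure_iUnion₀ hdisj fun s =>
          ((measurePreserving_comp_equiv _).measurable hKO).nullMeasurableSet, tsum_fintype]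
    _ = 2 ^ Fintype.card ι * volume (K ∩ blockOrdered ι) := by simp [hE]

theorem volume_Icc_inter_cornerSimplex_inter_blockOrdered [Fintype ι] :
    2 ^ Fintype.card ι * volume (Set.Icc 0 1 ∩ cornerSimplex (ι × Fin 2) 2 ∩ blockOrdered ι)
      = ENNReal.ofReal ((2 ^ (2 * Fintype.card ι) - (2 * Fintype.card ι : ℕ))
          / (2 * Fintype.card ι).factorial) := by
  rw [two_pow_mul_volume_inter_blockOrdered
      (measurableSet_Icc.inter (measurableSet_cornerSimplex 2)) fun σ => by
        rw [Set.preimage_inter, preimage_comp_equiv_Icc, preimage_comp_equiv_cornerSimplex],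
    volume_Icc_inter_cornerSimplex_two, Fintype.card_prod, Fintype.card_fin, mul_comm]

end BlockOrder

section BlockAffine

open Matrix

variable {ι κ : Type*} [Fintype ι] [Fintype κ]

lemma measurePreserving_mulVec_add [DecidableEq κ] {M : Matrix κ κ ℝ} (hM : |M.det| = 1)
    (c : κ → ℝ) : MeasurePreserving (fun x => M *ᵥ x + c) volume volume := by
  have hM₀ : M.det ≠ 0 := fun h => by simp [h] at hM
  have hlin : MeasurePreserving (toLin' M) volume volume :=
    ⟨(toLin' M).continuous_of_finiteDimensional.measurable, by
      rw [Real.map_matrix_volume_pi_eq_smul_volume_pi hM₀, abs_inv, hM, inv_one,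
        ENNReal.ofReal_one, one_smul]⟩
  simpa only [Function.comp_def, toLin'_apply] using
    (measurePreserving_add_right volume c).comp hlin

def blockAffine (B : ι → Matrix κ κ ℝ) (c : ι × κ → ℝ) (x : ι × κ → ℝ) : ι × κ → ℝ :=
  fun p => (B p.1 *ᵥ fun k => x (p.1, k)) p.2 + c p

theorem measurePreserving_blockAffine [DecidableEq ι] [DecidableEq κ] {B : ι → Matrix κ κ ℝ}
    (hB : ∀ j, |(B j).det| = 1) (c : ι × κ → ℝ) :
    MeasurePreserving (blockAffine B c) volume volume := by
  set M := (blockDiagonal B).submatrix (Equiv.prodComm ι κ) (Equiv.prodComm ι κ)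
  have hM : |M.det| = 1 := by
    rw [det_submatrix_equiv_self, det_blockDiagonal, Finset.abs_prod]
    simp [hB]
  convert measurePreserving_mulVec_add hM c using 1
  ext x ⟨j, i⟩
  simp [blockAffine, M, mulVec, dotProduct, Fintype.sum_prod_type, blockDiagonal_apply]

end BlockAffine

section Blocks

open Matrix

/-- With `blockShift`, the unimodular affine map `blockMap a g` taking `Δ₂` onto
`{0 ≤ z₁ ≤ z₀ ≤ 1}` and the linear form `⟨u_a, y⟩` (for `g = 0`; `⟨w_a, y⟩` for `g = 1`) to
`z₀ + z₁ - a`. -/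
noncomputable def blockMatrix : Fin 3 → Fin 2 → Matrix (Fin 2) (Fin 2) ℝ :=
  ![![!![1, 1; 0, 1], !![1, 1; 1, 0]],
    ![!![0, -1; 1, 0], !![-1, 0; 0, 1]],
    ![!![-1, 0; -1, -1], !![0, -1; -1, -1]]]

noncomputable def blockShift : Fin 3 → Fin 2 → Fin 2 → ℝ :=
  ![![![0, 0], ![0, 0]], ![![1, 0], ![1, 0]], ![![1, 1], ![1, 1]]]

noncomputable def blockMap (a : Fin 3) (g : Fin 2) (y : Fin 2 → ℝ) : Fin 2 → ℝ :=
  blockMatrix a g *ᵥ y + blockShift a g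

lemma abs_det_blockMatrix (a : Fin 3) (g : Fin 2) : |(blockMatrix a g).det| = 1 := by
  fin_cases a <;> fin_cases g <;> simp [blockMatrix, det_fin_two_of]

lemma blockMap_apply (a : Fin 3) (g : Fin 2) (y : Fin 2 → ℝ) (i : Fin 2) :
    blockMap a g y i
      = blockMatrix a g i 0 * y 0 + blockMatrix a g i 1 * y 1 + blockShift a g i := by
  rw [blockMap, Pi.add_apply, mulVec, dotProduct, Fin.sum_univ_two]

lemma blockMap_mem_iff (a : Fin 3) (g : Fin 2) (y : Fin 2 → ℝ) :
    (0 ≤ y ∧ y 0 + y 1 ≤ 1) ↔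
      blockMap a g y ∈ Set.Icc 0 1 ∧ blockMap a g y 1 ≤ blockMap a g y 0 := by
  simp only [Set.mem_Icc, Pi.le_def, Fin.forall_fin_two, Pi.zero_apply, Pi.one_apply,
    blockMap_apply]
  constructor
  · rintro ⟨⟨h0, h1⟩, h2⟩
    refine ⟨⟨⟨?_, ?_⟩, ?_, ?_⟩, ?_⟩ <;> fin_cases a <;> fin_cases g <;>
      norm_num [blockMatrix, blockShift] <;> linarith
  · rintro ⟨⟨⟨h0, h1⟩, h2, h3⟩, h4⟩
    fin_cases a <;> fin_cases g <;> norm_num [blockMatrix, blockShift] at h0 h1 h2 h3 h4 <;>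
      refine ⟨⟨?_, ?_⟩, ?_⟩ <;> linarith

lemma blockMap_sum (a : Fin 3) (g : Fin 2) (y : Fin 2 → ℝ) :
    blockMap a g y 0 + blockMap a g y 1
      = (if g = 0 then uVec else wVec) a 0 * y 0 + (if g = 0 then uVec else wVec) a 1 * y 1
        + (a : ℕ) := by
  simp only [blockMap_apply]
  fin_cases a <;> fin_cases g <;> norm_num [blockMatrix, blockShift, uVec, wVec] <;> ring

theorem setOf_sum_le_eq_preimage_blockAffine {ι : Type*} [Fintype ι] (A : ι → Fin 3)
    (g : Fin 2) :
    {x : ι × Fin 2 → ℝ |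
        (∀ p, 0 ≤ x p) ∧ (∀ j, x (j, 0) + x (j, 1) ≤ 1) ∧
        ∑ j, ((if g = 0 then uVec else wVec) (A j) 0 * x (j, 0)
              + (if g = 0 then uVec else wVec) (A j) 1 * x (j, 1))
          ≤ 2 - ∑ j, ((A j : ℕ) : ℝ)}
      = blockAffine (fun j => blockMatrix (A j) g) (fun p => blockShift (A p.1) g p.2) ⁻¹'
          (Set.Icc 0 1 ∩ cornerSimplex (ι × Fin 2) 2 ∩ blockOrdered ι) := by
  ext x
  set Φ := blockAffine (fun j => blockMatrix (A j) g) (fun p => blockShift (A p.1) g p.2)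
  have hΦ (j : ι) (i : Fin 2) : Φ x (j, i) = blockMap (A j) g (fun k => x (j, k)) i := rfl
  have hblocks : ((∀ p, 0 ≤ x p) ∧ ∀ j, x (j, 0) + x (j, 1) ≤ 1)
      ↔ Φ x ∈ Set.Icc 0 1 ∧ ∀ j, Φ x (j, 1) ≤ Φ x (j, 0) := by
    calc ((∀ p, 0 ≤ x p) ∧ ∀ j, x (j, 0) + x (j, 1) ≤ 1)
        ↔ ∀ j, 0 ≤ (fun k => x (j, k)) ∧ x (j, 0) + x (j, 1) ≤ 1 := by
          simp [Pi.le_def, Prod.forall, forall_and]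
      _ ↔ ∀ j, blockMap (A j) g (fun k => x (j, k)) ∈ Set.Icc 0 1
            ∧ blockMap (A j) g (fun k => x (j, k)) 1 ≤ blockMap (A j) g (fun k => x (j, k)) 0 :=
          forall_congr' fun j => blockMap_mem_iff (A j) g _
      _ ↔ Φ x ∈ Set.Icc 0 1 ∧ ∀ j, Φ x (j, 1) ≤ Φ x (j, 0) := by
          simp [Set.mem_Icc, Pi.le_def, Prod.forall, forall_and, hΦ]
  have hsum : ∑ p, Φ x p
      = ∑ j, ((if g = 0 then uVec else wVec) (A j) 0 * x (j, 0)
          + (if g = 0 then uVec else wVec) (A j) 1 * x (j, 1)) + ∑ j, ((A j : ℕ) : ℝ) := by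
    rw [Fintype.sum_prod_type, ← sum_add_distrib]
    refine sum_congr rfl fun j _ => ?_
    rw [Fin.sum_univ_two, hΦ, hΦ, blockMap_sum]
  simp only [Set.mem_ofPred_eq, Set.mem_preimage, Set.mem_inter_iff, cornerSimplex,
    blockOrdered, hsum]
  rw [← and_assoc, hblocks, le_sub_iff_add_le]
  exact ⟨fun ⟨⟨hI, hO⟩, hS⟩ => ⟨⟨hI, hI.1, hS⟩, hO⟩, fun ⟨⟨hI, _, hS⟩, hO⟩ => ⟨⟨hI, hO⟩, hS⟩⟩

end Blocks

theorem stmt17 (n : ℕ) (A : Fin n → Fin 3) (g : Fin 2) :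
    ((2 * n).factorial : ℝ) *
        (volume {x : Fin n × Fin 2 → ℝ |
          (∀ p, 0 ≤ x p) ∧ (∀ j, x (j, 0) + x (j, 1) ≤ 1) ∧
          ∑ j, ((if g = 0 then uVec else wVec) (A j) 0 * x (j, 0)
                + (if g = 0 then uVec else wVec) (A j) 1 * x (j, 1))
            ≤ 2 - ∑ j, ((A j : ℕ) : ℝ)}).toReal
      = 2 ^ n - n / 2 ^ (n - 1) := by
  have hvol := congrArg ENNReal.toReal
    (volume_Icc_inter_cornerSimplex_inter_blockOrdered (ι := Fin n))
  set D := Set.Icc 0 1 ∩ cornerSimplex (Fin n × Fin 2) 2 ∩ blockOrdered (Fin n)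
  have hD : MeasurableSet D := (measurableSet_Icc.inter (measurableSet_cornerSimplex 2)).inter
    measurableSet_blockOrdered
  rw [setOf_sum_le_eq_preimage_blockAffine, (measurePreserving_blockAffine
    (fun j => abs_det_blockMatrix (A j) g) _).measure_preimage hD.nullMeasurableSet]
  rw [ENNReal.toReal_mul, ENNReal.toReal_ofReal (div_nonneg (sub_nonneg.2
    (by exact_mod_cast Nat.lt_two_pow_self.le)) (by positivity))] at hvol
  simp only [ENNReal.toReal_pow, ENNReal.toReal_ofNat, Fintype.card_fin, Nat.cast_mul,
    Nat.cast_ofNat] at hvol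
  rw [show (volume D).toReal = (2 ^ (2 * n) - 2 * n) / (2 * n).factorial / 2 ^ n by
    rw [← hvol]
    field_simp]
  rcases n with _ | n
  · simp
  · rw [Nat.add_sub_cancel, show (2 : ℝ) ^ (2 * (n + 1)) = 2 ^ (n + 1) * 2 ^ (n + 1) by ring]
    field_simp
    ring
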